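/- Let δ > 0 and let a, b, H be continuous on (-1,-1+δ] with b and H⁺ bounded on (-1,-1+δ). Assume that either (i) a(x) > 0 for all x ∈ (-1,-1+δ] and ∫_{x}^{-1+δ} ds/a(s) → +∞ as x → -1⁺, or (ii) a(x) < 0 for all x ∈ (-1,-1+δ] and ∫_{x}^{-1+δ} ds/a(s) → -∞ as x → -1⁺. Suppose g ∈ C¹((-1,-1+δ]) satisfies the Riccati-type equation on (-1,-1+δ). Then g is bounded on (-1,-1+δ). If in addition H(x) tends to a limit (finite or infinite) as x → -1⁺ and b(x) tends to a finite limit as x → -1⁺, then lim_{x→-1⁺} g(x) exists and is finite, and lim_{x→-1⁺} a(x)·g'(x) = 0. -/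

import Mathlib

/-!
Write `c = -1`, `d = -1 + δ` and let `M` bound `|b|` and `H`. Where `|g| ≥ C := 4M + 4` the equation
gives `a g' ≤ -g²/4`; for `a > 0` this makes `g` decrease there. So `g` cannot fall below
`min (-C) (g d)`, and a value `g z > C` would persist on all of `(c, z]`, where then
`a (1/g)' ≥ 1/4`: integrating against the divergent `∫ 1/a` sends `1/g` to `-∞`, which is absurd.
The same integration shows that `a g'` cannot stay away from `0` near `c` while `g` is bounded;
this rules out `H → -∞` and forces the limit of `a g'` to vanish.

For convergence of `g`: at every level `y` that is not a root of `LH - Lb y - y²/2`, the equation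
fixes the sign of `g'` at the points near `c` where `g = y`, so `g` cannot cross `y` in both
directions there. Every level strictly between `liminf g` and `limsup g` is crossed both ways,
so there are no such levels.

Case (ii) reduces to case (i) through `(a, b, g) ↦ (-a, -b, -g)`.
-/

open Set Filter Topology

lemma le_of_deriv_neg_at_level {f f' : ℝ → ℝ} {w z y : ℝ} (hwz : w ≤ z)
    (hf : ContinuousOn f (Icc w z)) (hf' : ∀ x ∈ Ico w z, HasDerivAt f (f' x) x)
    (hw : f w ≤ y) (hy : ∀ x ∈ Ico w z, f x = y → f' x < 0) : f z ≤ y :=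
  image_le_of_deriv_right_lt_deriv_boundary' hf (fun x hx => (hf' x hx).hasDerivWithinAt)
    (B := fun _ => y) (B' := 0) hw continuousOn_const
    (fun _ _ => hasDerivWithinAt_const _ _ _) hy ⟨hwz, le_rfl⟩

lemma eventually_le_of_frequently_le {f f' : ℝ → ℝ} {c y : ℝ}
    (hf : ∀ᶠ x in 𝓝[>] c, HasDerivAt f (f' x) x)
    (hy : ∀ᶠ x in 𝓝[>] c, f x = y → f' x < 0)
    (hfreq : ∃ᶠ x in 𝓝[>] c, f x ≤ y) : ∀ᶠ x in 𝓝[>] c, f x ≤ y := by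
  obtain ⟨u, hcu, hsub⟩ := mem_nhdsGT_iff_exists_Ioo_subset.1 (hf.and hy)
  filter_upwards [Ioo_mem_nhdsGT hcu] with z hz
  obtain ⟨w, hwy, hw⟩ := (hfreq.and_eventually (Ioo_mem_nhdsGT hz.1)).exists
  have hwz : Icc w z ⊆ Ioo c u := fun x hx => ⟨hw.1.trans_le hx.1, hx.2.trans_lt hz.2⟩
  exact le_of_deriv_neg_at_level hw.2.le
    (fun x hx => (hsub (hwz hx)).1.continuousAt.continuousWithinAt)
    (fun x hx => (hsub (hwz (Ico_subset_Icc_self hx))).1) hwy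
    (fun x hx => (hsub (hwz (Ico_subset_Icc_self hx))).2)

lemma eventually_le_or_ge_of_deriv_sign_at_level {f f' : ℝ → ℝ} {c y : ℝ}
    (hf : ∀ᶠ x in 𝓝[>] c, HasDerivAt f (f' x) x)
    (hy : (∀ᶠ x in 𝓝[>] c, f x = y → f' x < 0) ∨ (∀ᶠ x in 𝓝[>] c, f x = y → 0 < f' x)) :
    (∀ᶠ x in 𝓝[>] c, f x ≤ y) ∨ (∀ᶠ x in 𝓝[>] c, y ≤ f x) := by
  rcases hy with hneg | hpos
  · by_cases hfreq : ∃ᶠ x in 𝓝[>] c, f x ≤ y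
    · exact .inl (eventually_le_of_frequently_le hf hneg hfreq)
    · exact .inr ((not_frequently.1 hfreq).mono fun x hx => (not_le.1 hx).le)
  · by_cases hfreq : ∃ᶠ x in 𝓝[>] c, y ≤ f x
    · refine .inr ((eventually_le_of_frequently_le (f := fun x => -f x) (f' := fun x => -f' x)
        (hf.mono fun x hx => hx.neg) (hpos.mono fun x hx hfx => ?_)
        (hfreq.mono fun x hx => neg_le_neg hx)).mono fun x hx => neg_le_neg_iff.1 hx)
      exact neg_neg_iff_pos.2 (hx (neg_inj.1 hfx))
    · exact .inl ((not_frequently.1 hfreq).mono fun x hx => (not_le.1 hx).le)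

lemma exists_tendsto_of_eventually_le_or_ge {α : Type*} {l : Filter α} [l.NeBot] {f : α → ℝ}
    {S : Set ℝ} (hle : IsBoundedUnder (· ≤ ·) l f) (hge : IsBoundedUnder (· ≥ ·) l f)
    (hS : S.Countable) (h : ∀ y ∉ S, (∀ᶠ x in l, f x ≤ y) ∨ (∀ᶠ x in l, y ≤ f x)) :
    ∃ L, Tendsto f l (𝓝 L) := by
  refine ⟨limsup f l, tendsto_of_liminf_eq_limsup ?_ rfl hle hge⟩
  by_contra hne
  obtain ⟨y, hyS, hy⟩ :=
    (hS.dense_compl ℝ).exists_between ((liminf_le_limsup hle hge).lt_of_ne hne)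
  rcases h y hyS with hfy | hfy
  · exact (limsup_le_of_le hge.isCoboundedUnder_flip hfy).not_gt hy.2
  · exact (le_liminf_of_le hle.isCoboundedUnder_flip hfy).not_gt hy.1

lemma finite_setOf_quadratic_eq_zero {p q r : ℝ} (hp : p ≠ 0) :
    {y : ℝ | p * y ^ 2 + q * y + r = 0}.Finite := by
  open Polynomial in
  have hP : C p * X ^ 2 + C q * X + C r ≠ 0 := fun h => hp <| by
    simpa using congrArg (coeff · 2) h
  simpa using finite_setOfPred_isRoot hP

lemma riccati_rhs_le_neg_sq {b H y M : ℝ} (hb : |b| ≤ M) (hH : H ≤ M) (hy : 4 * M + 4 ≤ |y|) :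
    H - b * y - y ^ 2 / 2 ≤ -(y ^ 2 / 4) := by
  have hby : -(b * y) ≤ M * |y| :=
    (neg_le_abs _).trans ((abs_mul b y).trans_le (mul_le_mul_of_nonneg_right hb (abs_nonneg y)))
  nlinarith [sq_abs y, mul_le_mul_of_nonneg_right hy (abs_nonneg y), abs_nonneg b]

lemma min_le_of_deriv_neg_of_le_abs {g g' : ℝ → ℝ} {c d C : ℝ} (hC : 0 ≤ C)
    (hgc : ContinuousOn g (Ioc c d)) (hg : ∀ x ∈ Ioo c d, HasDerivAt g (g' x) x)
    (hneg : ∀ x ∈ Ioo c d, C ≤ |g x| → g' x < 0) : ∀ x ∈ Ioc c d, min (-C) (g d) ≤ g x := by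
  intro z hz
  by_contra! hlt
  have hsub : Icc z d ⊆ Ioc c d := fun x hx => ⟨hz.1.trans_le hx.1, hx.2⟩
  have hle := le_of_deriv_neg_at_level hz.2 (hgc.mono hsub)
    (fun x hx => hg x ⟨hz.1.trans_le hx.1, hx.2⟩) le_rfl fun x hx hgx =>
      hneg x ⟨hz.1.trans_le hx.1, hx.2⟩ (by
        rw [hgx, abs_of_neg ((hlt.trans_le (min_le_left _ _)).trans_le (neg_nonpos.2 hC))]
        linarith [min_le_left (-C) (g d)])
  linarith [min_le_right (-C) (g d)]

lemma exists_tendsto_of_riccati {a b H g g' : ℝ → ℝ} {c LH Lb : ℝ}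
    (hapos : ∀ᶠ x in 𝓝[>] c, 0 < a x) (hg : ∀ᶠ x in 𝓝[>] c, HasDerivAt g (g' x) x)
    (hgb : ∃ M, ∀ᶠ x in 𝓝[>] c, |g x| ≤ M)
    (hag : ∀ᶠ x in 𝓝[>] c, a x * g' x = H x - b x * g x - g x ^ 2 / 2)
    (hH : Tendsto H (𝓝[>] c) (𝓝 LH)) (hb : Tendsto b (𝓝[>] c) (𝓝 Lb)) :
    ∃ L, Tendsto g (𝓝[>] c) (𝓝 L) := by
  obtain ⟨M, hM⟩ := hgb
  refine exists_tendsto_of_eventually_le_or_ge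
    (isBoundedUnder_of_eventually_le (hM.mono fun x hx => (abs_le.1 hx).2))
    (isBoundedUnder_of_eventually_ge (hM.mono fun x hx => (abs_le.1 hx).1))
    (finite_setOf_quadratic_eq_zero (p := -1 / 2) (q := -Lb) (r := LH) (by norm_num)).countable
    fun y hy => eventually_le_or_ge_of_deriv_sign_at_level hg ?_
  have hκ : LH - Lb * y - y ^ 2 / 2 ≠ 0 := fun h => hy (show _ = _ by linarith)
  have hlim : Tendsto (fun x => H x - b x * y - y ^ 2 / 2) (𝓝[>] c) (𝓝 (LH - Lb * y - y ^ 2 / 2)) :=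
    (hH.sub (hb.mul_const y)).sub_const _
  rcases hκ.lt_or_gt with hneg | hpos
  · left
    filter_upwards [hlim.eventually (eventually_lt_nhds hneg), hapos, hag] with x hx hax hagx hgx
    rw [hgx] at hagx
    exact neg_of_mul_neg_right (hagx ▸ hx) hax.le
  · right
    filter_upwards [hlim.eventually (eventually_gt_nhds hpos), hapos, hag] with x hx hax hagx hgx
    rw [hgx] at hagx
    exact pos_of_mul_pos_right (hagx ▸ hx) hax.le

/-- Case (i) of the hypothesis on `a`, on `(c, d]` in place of `(-1, -1 + δ]`. -/
structure IsSingularCoeff (a : ℝ → ℝ) (c d : ℝ) : Prop where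
  lt : c < d
  continuousOn : ContinuousOn a (Ioc c d)
  pos : ∀ x ∈ Ioc c d, 0 < a x
  tendsto_integral : Tendsto (fun x => ∫ s in x..d, 1 / a s) (𝓝[>] c) atTop

namespace IsSingularCoeff

variable {a : ℝ → ℝ} {c d : ℝ}

lemma continuousOn_one_div (ha : IsSingularCoeff a c d) :
    ContinuousOn (fun s => 1 / a s) (Ioc c d) :=
  continuousOn_const.div ha.continuousOn fun s hs => (ha.pos s hs).ne'

lemma tendsto_atBot_of_le_mul_deriv (ha : IsSingularCoeff a c d) {g g' : ℝ → ℝ} {ε : ℝ}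
    (hε : 0 < ε) (hg : ∀ᶠ x in 𝓝[>] c, HasDerivAt g (g' x) x)
    (h : ∀ᶠ x in 𝓝[>] c, ε ≤ a x * g' x) : Tendsto g (𝓝[>] c) atBot := by
  obtain ⟨u, hcu, hsub⟩ :=
    mem_nhdsGT_iff_exists_Ioo_subset.1 ((hg.and h).and (Ioo_mem_nhdsGT ha.lt))
  obtain ⟨z, hz⟩ := nonempty_Ioo.2 (show c < u from hcu)
  have hzd : z ∈ Ioc c d := ⟨hz.1, (hsub hz).2.2.le⟩
  have hbound : ∀ x ∈ Ioo c z,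
      g x ≤ g z + ε * (∫ s in z..d, 1 / a s) - ε * ∫ s in x..d, 1 / a s := by
    intro x hx
    have hxz : Icc x z ⊆ Ioo c u := fun s hs => ⟨hx.1.trans_le hs.1, hs.2.trans_lt hz.2⟩
    have hxd : Icc x z ⊆ Ioc c d := fun s hs => ⟨(hxz hs).1, (hsub (hxz hs)).2.2.le⟩
    have hint : ∀ y ∈ Ioc c d, IntervalIntegrable (fun s => 1 / a s) MeasureTheory.volume x y :=
      fun y hy => (ha.continuousOn_one_div.mono
        (ordConnected_Ioc.uIcc_subset (hxd ⟨le_rfl, hx.2.le⟩) hy)).intervalIntegrable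
    have hsplit : ∫ s in x..d, 1 / a s = (∫ s in x..z, 1 / a s) + ∫ s in z..d, 1 / a s :=
      (intervalIntegral.integral_add_adjacent_intervals (hint z hzd)
        ((hint z hzd).symm.trans (hint d ⟨ha.lt, le_rfl⟩))).symm
    have hFTC : ∫ s in x..z, ε * (1 / a s) ≤ g z - g x := by
      refine intervalIntegral.integral_le_sub_of_hasDeriv_right_of_le hx.2.le
        (fun s hs => (hsub (hxz hs)).1.1.continuousAt.continuousWithinAt)
        (fun s hs => (hsub (hxz (Ioo_subset_Icc_self hs))).1.1.hasDerivWithinAt)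
        ((continuousOn_const.mul ha.continuousOn_one_div).mono hxd).integrableOn_Icc
        fun s hs => ?_
      have has := ha.pos s (hxd (Ioo_subset_Icc_self hs))
      rw [mul_one_div, div_le_iff₀ has, mul_comm]
      exact (hsub (hxz (Ioo_subset_Icc_self hs))).1.2
    rw [intervalIntegral.integral_const_mul] at hFTC
    rw [hsplit, mul_add]
    linarith
  refine tendsto_atBot_mono' _ (eventually_of_mem (Ioo_mem_nhdsGT hz.1) hbound) ?_
  simpa only [sub_eq_add_neg, Function.comp_def] using
    tendsto_atBot_add_const_left _ (g z + ε * (∫ s in z..d, 1 / a s))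
      (tendsto_neg_atTop_atBot.comp (ha.tendsto_integral.const_mul_atTop hε))


lemma not_eventually_le_mul_deriv (ha : IsSingularCoeff a c d) {g g' : ℝ → ℝ} {ε : ℝ}
    (hgb : ∃ M, ∀ᶠ x in 𝓝[>] c, |g x| ≤ M) (hε : 0 < ε)
    (hg : ∀ᶠ x in 𝓝[>] c, HasDerivAt g (g' x) x) : ¬ ∀ᶠ x in 𝓝[>] c, ε ≤ a x * g' x := by
  intro h
  obtain ⟨M, hM⟩ := hgb
  obtain ⟨x, hxM, hx⟩ :=
    (((ha.tendsto_atBot_of_le_mul_deriv hε hg h).eventually_lt_atBot (-M)).and hM).exists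
  linarith [neg_abs_le (g x)]

lemma not_eventually_mul_deriv_le (ha : IsSingularCoeff a c d) {g g' : ℝ → ℝ} {ε : ℝ}
    (hgb : ∃ M, ∀ᶠ x in 𝓝[>] c, |g x| ≤ M) (hε : 0 < ε)
    (hg : ∀ᶠ x in 𝓝[>] c, HasDerivAt g (g' x) x) : ¬ ∀ᶠ x in 𝓝[>] c, a x * g' x ≤ -ε := by
  intro h
  refine ha.not_eventually_le_mul_deriv (g := fun x => -g x) (g' := fun x => -g' x)
    (by simpa only [abs_neg] using hgb) hε (hg.mono fun x hx => hx.neg) ?_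
  filter_upwards [h] with x hx
  linarith [mul_neg (a x) (g' x)]

lemma eq_zero_of_tendsto_mul_deriv (ha : IsSingularCoeff a c d) {g g' : ℝ → ℝ} {κ : ℝ}
    (hgb : ∃ M, ∀ᶠ x in 𝓝[>] c, |g x| ≤ M) (hg : ∀ᶠ x in 𝓝[>] c, HasDerivAt g (g' x) x)
    (h : Tendsto (fun x => a x * g' x) (𝓝[>] c) (𝓝 κ)) : κ = 0 := by
  rcases lt_trichotomy κ 0 with hκ | hκ | hκ
  · refine absurd (h.eventually (eventually_le_nhds (a := κ) (b := -(-κ / 2)) (by linarith)))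
      (ha.not_eventually_mul_deriv_le hgb (by linarith) hg)
  · exact hκ
  · exact absurd (h.eventually (eventually_ge_nhds (half_lt_self hκ)))
      (ha.not_eventually_le_mul_deriv hgb (half_pos hκ) hg)

lemma le_of_mul_deriv_le_neg_sq (ha : IsSingularCoeff a c d) {g g' : ℝ → ℝ} {C : ℝ}
    (hC : 0 < C) (hg : ∀ x ∈ Ioo c d, HasDerivAt g (g' x) x)
    (hdecay : ∀ x ∈ Ioo c d, C ≤ |g x| → a x * g' x ≤ -(g x ^ 2 / 4))
    (hneg : ∀ x ∈ Ioo c d, C ≤ |g x| → g' x < 0) :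
    ∀ x ∈ Ioo c d, g x ≤ C := by
  intro z hz
  by_contra! hCz
  have hge : ∀ w ∈ Ioc c z, g z ≤ g w := by
    intro w hw
    by_contra! hwz
    have hwz' : w < z := hw.2.lt_of_ne (by rintro rfl; exact lt_irrefl _ hwz)
    have hsub : Icc w z ⊆ Ioo c d := fun x hx => ⟨hw.1.trans_le hx.1, hx.2.trans_lt hz.2⟩
    have hle := le_of_deriv_neg_at_level hwz'.le
      (fun x hx => (hg x (hsub hx)).continuousAt.continuousWithinAt)
      (fun x hx => hg x (hsub (Ico_subset_Icc_self hx))) (le_max_right C (g w))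
      fun x hx hgx => hneg x (hsub (Ico_subset_Icc_self hx))
        (hgx ▸ (le_max_left _ _).trans (le_abs_self _))
    exact (max_lt hCz hwz).not_ge hle
  have hpos : ∀ w ∈ Ioc c z, C < g w := fun w hw => hCz.trans_le (hge w hw)
  have hIoc : Ioc c z ∈ 𝓝[>] c := Ioc_mem_nhdsGT hz.1
  have hinv : Tendsto (fun x => (g x)⁻¹) (𝓝[>] c) atBot := by
    refine ha.tendsto_atBot_of_le_mul_deriv (g' := fun x => -g' x / g x ^ 2)
      (by norm_num : (0 : ℝ) < 1 / 4) ?_ ?_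
    · filter_upwards [hIoc] with x hx
      exact (hg x ⟨hx.1, hx.2.trans_lt hz.2⟩).inv (hC.trans (hpos x hx)).ne'
    · filter_upwards [hIoc] with x hx
      have hgx := hC.trans (hpos x hx)
      have hdx := hdecay x ⟨hx.1, hx.2.trans_lt hz.2⟩ (by rw [abs_of_pos hgx]; exact (hpos x hx).le)
      rw [mul_div_assoc', le_div_iff₀ (by positivity)]
      linarith [mul_neg (a x) (g' x)]
  obtain ⟨x, hx0, hx⟩ := ((hinv.eventually_lt_atBot 0).and hIoc).exists
  exact (inv_pos.2 (hC.trans (hpos x hx))).not_gt hx0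

lemma exists_abs_le_of_mul_deriv_le_neg_sq (ha : IsSingularCoeff a c d) {g g' : ℝ → ℝ} {C : ℝ}
    (hC : 0 < C) (hgc : ContinuousOn g (Ioc c d)) (hg : ∀ x ∈ Ioo c d, HasDerivAt g (g' x) x)
    (hdecay : ∀ x ∈ Ioo c d, C ≤ |g x| → a x * g' x ≤ -(g x ^ 2 / 4)) :
    ∃ M, ∀ x ∈ Ioo c d, |g x| ≤ M := by
  have hneg : ∀ x ∈ Ioo c d, C ≤ |g x| → g' x < 0 := fun x hx hCx => by
    have hgx : 0 < g x ^ 2 := by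
      rw [← sq_abs]; exact pow_pos (hC.trans_le hCx) 2
    exact neg_of_mul_neg_right ((hdecay x hx hCx).trans_lt (by linarith))
      (ha.pos x (Ioo_subset_Ioc_self hx)).le
  refine ⟨C + |g d|, fun x hx => abs_le.2 ⟨?_, ?_⟩⟩
  · calc -(C + |g d|) ≤ min (-C) (g d) :=
          le_min (by linarith [abs_nonneg (g d)]) (by linarith [neg_abs_le (g d)])
      _ ≤ g x := min_le_of_deriv_neg_of_le_abs hC.le hgc hg hneg x (Ioo_subset_Ioc_self hx)
  · linarith [ha.le_of_mul_deriv_le_neg_sq hC hg hdecay hneg x hx, abs_nonneg (g d)]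


theorem riccati (ha : IsSingularCoeff a c d) {b H g g' : ℝ → ℝ} {M : ℝ}
    (hb : ∀ x ∈ Ioo c d, |b x| ≤ M) (hH : ∀ x ∈ Ioo c d, H x ≤ M)
    (hgc : ContinuousOn g (Ioc c d)) (hg : ∀ x ∈ Ioo c d, HasDerivAt g (g' x) x)
    (heq : ∀ x ∈ Ioo c d, a x * g' x + b x * g x + (1 / 2) * g x ^ 2 = H x) :
    (∃ M : ℝ, ∀ x ∈ Ioo c d, |g x| ≤ M) ∧
    (((∃ LH : ℝ, Tendsto H (𝓝[>] c) (𝓝 LH)) ∨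
        Tendsto H (𝓝[>] c) atTop ∨ Tendsto H (𝓝[>] c) atBot) →
      (∃ Lb : ℝ, Tendsto b (𝓝[>] c) (𝓝 Lb)) →
      (∃ L : ℝ, Tendsto g (𝓝[>] c) (𝓝 L)) ∧
        Tendsto (fun x => a x * g' x) (𝓝[>] c) (𝓝 0)) := by
  have hag : ∀ x ∈ Ioo c d, a x * g' x = H x - b x * g x - g x ^ 2 / 2 := fun x hx => by
    linarith [heq x hx]
  obtain ⟨Mg, hMg⟩ := ha.exists_abs_le_of_mul_deriv_le_neg_sq (C := 4 * |M| + 4) (by positivity)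
    hgc hg fun x hx hgx => (hag x hx).trans_le <| riccati_rhs_le_neg_sq
      ((hb x hx).trans (le_abs_self M)) ((hH x hx).trans (le_abs_self M)) hgx
  refine ⟨⟨Mg, hMg⟩, fun hHlim ⟨Lb, hLb⟩ => ?_⟩
  have hIoo : ∀ᶠ x in 𝓝[>] c, x ∈ Ioo c d := Ioo_mem_nhdsGT ha.lt
  have hgb : ∃ M, ∀ᶠ x in 𝓝[>] c, |g x| ≤ M := ⟨Mg, hIoo.mono hMg⟩
  have hg' : ∀ᶠ x in 𝓝[>] c, HasDerivAt g (g' x) x := hIoo.mono hg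
  have hag' : ∀ᶠ x in 𝓝[>] c, a x * g' x = H x - b x * g x - g x ^ 2 / 2 := hIoo.mono hag
  rcases hHlim with ⟨LH, hLH⟩ | hTop | hBot
  · obtain ⟨L, hL⟩ := exists_tendsto_of_riccati
      (hIoo.mono fun x hx => ha.pos x (Ioo_subset_Ioc_self hx)) hg' hgb hag' hLH hLb
    have hlim : Tendsto (fun x => a x * g' x) (𝓝[>] c) (𝓝 (LH - Lb * L - L ^ 2 / 2)) :=
      ((hLH.sub (hLb.mul hL)).sub ((hL.pow 2).div_const 2)).congr' (hag'.mono fun x hx => hx.symm)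
    exact ⟨⟨L, hL⟩, ha.eq_zero_of_tendsto_mul_deriv hgb hg' hlim ▸ hlim⟩
  · obtain ⟨x, hx, hxd⟩ := ((hTop.eventually_gt_atTop M).and hIoo).exists
    exact absurd (hH x hxd) hx.not_ge
  · refine absurd ?_ (ha.not_eventually_mul_deriv_le hgb one_pos hg')
    filter_upwards [hBot.eventually_le_atBot (-(M * Mg) - 1), hIoo, hag'] with x hHx hx hagx
    have hbg : -(b x * g x) ≤ M * Mg := (neg_le_abs _).trans <| (abs_mul _ _).trans_le <|
      mul_le_mul (hb x hx) (hMg x hx) (abs_nonneg _) ((abs_nonneg _).trans (hb x hx))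
    nlinarith [sq_nonneg (g x)]

theorem riccati_of_neg (ha : IsSingularCoeff (fun x => -a x) c d) {b H g g' : ℝ → ℝ} {M : ℝ}
    (hb : ∀ x ∈ Ioo c d, |b x| ≤ M) (hH : ∀ x ∈ Ioo c d, H x ≤ M)
    (hgc : ContinuousOn g (Ioc c d)) (hg : ∀ x ∈ Ioo c d, HasDerivAt g (g' x) x)
    (heq : ∀ x ∈ Ioo c d, a x * g' x + b x * g x + (1 / 2) * g x ^ 2 = H x) :
    (∃ M : ℝ, ∀ x ∈ Ioo c d, |g x| ≤ M) ∧
    (((∃ LH : ℝ, Tendsto H (𝓝[>] c) (𝓝 LH)) ∨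
        Tendsto H (𝓝[>] c) atTop ∨ Tendsto H (𝓝[>] c) atBot) →
      (∃ Lb : ℝ, Tendsto b (𝓝[>] c) (𝓝 Lb)) →
      (∃ L : ℝ, Tendsto g (𝓝[>] c) (𝓝 L)) ∧
        Tendsto (fun x => a x * g' x) (𝓝[>] c) (𝓝 0)) := by
  obtain ⟨⟨Mg, hMg⟩, hlim⟩ := ha.riccati (b := fun x => -b x) (g := fun x => -g x)
    (g' := fun x => -g' x) (by simpa only [abs_neg] using hb) hH hgc.neg
    (fun x hx => (hg x hx).neg) fun x hx => by rw [← heq x hx]; ring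
  refine ⟨⟨Mg, by simpa only [abs_neg] using hMg⟩, fun hHlim ⟨Lb, hLb⟩ => ?_⟩
  obtain ⟨⟨L, hL⟩, hag⟩ := hlim hHlim ⟨-Lb, hLb.neg⟩
  exact ⟨⟨-L, by simpa only [neg_neg] using hL.neg⟩, by simpa only [neg_mul_neg] using hag⟩

end IsSingularCoeff

theorem stmt11_general (δ : ℝ) (hδ : 0 < δ) (a b H g g' : ℝ → ℝ)
    (ha : ContinuousOn a (Ioc (-1 : ℝ) (-1 + δ)))
    (hbBdd : ∃ M : ℝ, ∀ x ∈ Ioo (-1 : ℝ) (-1 + δ), |b x| ≤ M)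
    (hHpBdd : ∃ M : ℝ, ∀ x ∈ Ioo (-1 : ℝ) (-1 + δ), max (H x) 0 ≤ M)
    (haSign :
      ((∀ x ∈ Ioc (-1 : ℝ) (-1 + δ), 0 < a x) ∧
        Tendsto (fun x => ∫ s in x..(-1 + δ), 1 / a s) (𝓝[>] (-1)) atTop) ∨
      ((∀ x ∈ Ioc (-1 : ℝ) (-1 + δ), a x < 0) ∧
        Tendsto (fun x => ∫ s in x..(-1 + δ), 1 / a s) (𝓝[>] (-1)) atBot))
    (hg : ∀ x ∈ Ioc (-1 : ℝ) (-1 + δ),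
      HasDerivWithinAt g (g' x) (Ioc (-1 : ℝ) (-1 + δ)) x)
    (heq : ∀ x ∈ Ioo (-1 : ℝ) (-1 + δ),
      a x * g' x + b x * g x + (1 / 2) * (g x) ^ 2 = H x) :
    (∃ M : ℝ, ∀ x ∈ Ioo (-1 : ℝ) (-1 + δ), |g x| ≤ M) ∧
    (((∃ LH : ℝ, Tendsto H (𝓝[>] (-1)) (𝓝 LH)) ∨
        Tendsto H (𝓝[>] (-1)) atTop ∨ Tendsto H (𝓝[>] (-1)) atBot) →
      (∃ Lb : ℝ, Tendsto b (𝓝[>] (-1)) (𝓝 Lb)) →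
      (∃ L : ℝ, Tendsto g (𝓝[>] (-1)) (𝓝 L)) ∧
        Tendsto (fun x => a x * g' x) (𝓝[>] (-1)) (𝓝 0)) := by
  obtain ⟨Mb, hMb⟩ := hbBdd
  obtain ⟨MH, hMH⟩ := hHpBdd
  have hb : ∀ x ∈ Ioo (-1 : ℝ) (-1 + δ), |b x| ≤ max Mb MH :=
    fun x hx => (hMb x hx).trans (le_max_left _ _)
  have hH : ∀ x ∈ Ioo (-1 : ℝ) (-1 + δ), H x ≤ max Mb MH :=
    fun x hx => (le_max_left _ _).trans ((hMH x hx).trans (le_max_right _ _))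
  have hgc : ContinuousOn g (Ioc (-1) (-1 + δ)) := fun x hx => (hg x hx).continuousWithinAt
  have hgd : ∀ x ∈ Ioo (-1 : ℝ) (-1 + δ), HasDerivAt g (g' x) x :=
    fun x hx => (hg x (Ioo_subset_Ioc_self hx)).hasDerivAt (Ioc_mem_nhds hx.1 hx.2)
  have hlt : (-1 : ℝ) < -1 + δ := by linarith
  rcases haSign with ⟨hpos, hJ⟩ | ⟨hneg, hJ⟩
  · exact IsSingularCoeff.riccati ⟨hlt, ha, hpos, hJ⟩ hb hH hgc hgd heq
  · refine IsSingularCoeff.riccati_of_neg ⟨hlt, ha.neg, fun x hx => neg_pos.2 (hneg x hx), ?_⟩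
      hb hH hgc hgd heq
    simpa only [one_div_neg_eq_neg_one_div, intervalIntegral.integral_neg, Function.comp_def] using
      tendsto_neg_atBot_atTop.comp hJ

/-- Boundedness and convergence of C¹ solutions of the Riccati-type equation
a·g' + b·g + g²/2 = H near x = -1. -/
theorem stmt11 (δ : ℝ) (hδ : 0 < δ) (a b H g g' : ℝ → ℝ)
    (ha : ContinuousOn a (Ioc (-1 : ℝ) (-1 + δ)))
    (hb : ContinuousOn b (Ioc (-1 : ℝ) (-1 + δ)))
    (hH : ContinuousOn H (Ioc (-1 : ℝ) (-1 + δ)))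
    (hbBdd : ∃ M : ℝ, ∀ x ∈ Ioo (-1 : ℝ) (-1 + δ), |b x| ≤ M)
    (hHpBdd : ∃ M : ℝ, ∀ x ∈ Ioo (-1 : ℝ) (-1 + δ), max (H x) 0 ≤ M)
    (haSign :
      ((∀ x ∈ Ioc (-1 : ℝ) (-1 + δ), 0 < a x) ∧
        Tendsto (fun x => ∫ s in x..(-1 + δ), 1 / a s) (𝓝[>] (-1)) atTop) ∨
      ((∀ x ∈ Ioc (-1 : ℝ) (-1 + δ), a x < 0) ∧
        Tendsto (fun x => ∫ s in x..(-1 + δ), 1 / a s) (𝓝[>] (-1)) atBot))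
    (hg : ∀ x ∈ Ioc (-1 : ℝ) (-1 + δ),
      HasDerivWithinAt g (g' x) (Ioc (-1 : ℝ) (-1 + δ)) x)
    (hg' : ContinuousOn g' (Ioc (-1 : ℝ) (-1 + δ)))
    (heq : ∀ x ∈ Ioo (-1 : ℝ) (-1 + δ),
      a x * g' x + b x * g x + (1 / 2) * (g x) ^ 2 = H x) :
    (∃ M : ℝ, ∀ x ∈ Ioo (-1 : ℝ) (-1 + δ), |g x| ≤ M) ∧
    (((∃ LH : ℝ, Tendsto H (𝓝[>] (-1)) (𝓝 LH)) ∨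
        Tendsto H (𝓝[>] (-1)) atTop ∨ Tendsto H (𝓝[>] (-1)) atBot) →
      (∃ Lb : ℝ, Tendsto b (𝓝[>] (-1)) (𝓝 Lb)) →
      (∃ L : ℝ, Tendsto g (𝓝[>] (-1)) (𝓝 L)) ∧
        Tendsto (fun x => a x * g' x) (𝓝[>] (-1)) (𝓝 0)) :=
  stmt11_general δ hδ a b H g g' ha hbBdd hHpBdd haSign hg heq
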